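/- Let X = αY + ε with α > 0, where Y and ε are independent with Student densities of the same tail index ν > 0: P_Y(y) = C_ν(1+y²/ν)^{−(ν+1)/2} and P_ε(e) = (C_ν/σ)(1+e²/(νσ²))^{−(ν+1)/2} with σ > 0. Then the upper tail dependence coefficient λ = lim_{u→1} P(X > F_X⁻¹(u) | Y > F_Y⁻¹(u)) equals 1/(1 + (σ/α)^ν). -/

import Mathlib

/-!
Both summands have power tails, `P(Y > y) ~ c y^{-ν}` and `P(ε > y) ~ c σ^ν y^{-ν}` with
`c = C_ν ν^{(ν-1)/2}`, obtained by integrating the density against `t^{-(ν+1)}`. By the single big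
jump principle `P(αY + ε > x) ~ (α^ν c + c σ^ν) x^{-ν}`, and as long as `αs < t` the joint event
`{αY + ε > t, Y > s}` is asymptotically the event that `αY` alone exceeds `t`, so its probability is
`~ α^ν c t^{-ν}`. At level `u` both quantiles satisfy `q^ν (1 - u) → (tail constant)`, which forces
`α F_Y⁻¹(u) < F_X⁻¹(u)` eventually, and the conditional probability tends to
`α^ν c / (α^ν c + c σ^ν) = 1 / (1 + (σ/α)^ν)`.
-/

open MeasureTheory ProbabilityTheory Filter Real Set

/-- The normalization constant `C_ν = Γ((ν+1)/2)/(Γ(ν/2)√(νπ))` of the Student density. -/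
noncomputable def Cnu (ν : ℝ) : ℝ :=
  Real.Gamma ((ν + 1) / 2) / (Real.Gamma (ν / 2) * Real.sqrt (ν * Real.pi))

/-- The Student density with `ν` degrees of freedom and scale factor `σ`. -/
noncomputable def studentPdf (ν σ x : ℝ) : ℝ :=
  Cnu ν / σ * (1 + x ^ 2 / (ν * σ ^ 2)) ^ (-((ν + 1) / 2))

/-- The (left-continuous generalized inverse) quantile function of a CDF `F`. -/
noncomputable def quantile (F : ℝ → ℝ) (u : ℝ) : ℝ := sInf {x : ℝ | u ≤ F x}

open Topology

def HasPowerTail (F : ℝ → ℝ) (ν c : ℝ) : Prop :=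
  Tendsto (fun x => x ^ ν * F x) atTop (𝓝 c)

namespace HasPowerTail

variable {F G : ℝ → ℝ} {ν c : ℝ}

theorem congr' (h : HasPowerTail F ν c) (hFG : F =ᶠ[atTop] G) : HasPowerTail G ν c :=
  Tendsto.congr' (hFG.mono fun x hx => by rw [hx]) h

theorem tendsto_comp {β : Type*} {l : Filter β} {w : β → ℝ} (h : HasPowerTail F ν c)
    (hw : Tendsto w l atTop) : Tendsto (fun b => w b ^ ν * F (w b)) l (𝓝 c) :=
  Tendsto.comp h hw

theorem tendsto_zero (h : HasPowerTail F ν c) (hν : 0 < ν) : Tendsto F atTop (𝓝 0) := by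
  have h0 := h.mul (tendsto_rpow_neg_atTop hν)
  rw [mul_zero] at h0
  refine h0.congr' ?_
  filter_upwards [eventually_gt_atTop 0] with x hx
  rw [mul_right_comm, ← rpow_add hx, add_neg_cancel, rpow_zero, one_mul]

theorem comp_mul_add (h : HasPowerTail F ν c) {a : ℝ} (ha : 0 < a) (b : ℝ) :
    HasPowerTail (fun x => F (a * x + b)) ν (a⁻¹ ^ ν * c) := by
  have hg : Tendsto (fun x : ℝ => a * x + b) atTop atTop :=
    tendsto_atTop_add_const_right _ b (tendsto_id.const_mul_atTop ha)
  have hratio : Tendsto (fun x : ℝ => (a + b * x⁻¹)⁻¹) atTop (𝓝 a⁻¹) := by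
    refine Tendsto.inv₀ ?_ ha.ne'
    simpa using tendsto_const_nhds.add (tendsto_inv_atTop_zero.const_mul b)
  have hlim := ((continuousAt_rpow_const _ ν (Or.inl (inv_pos.2 ha).ne')).tendsto.comp
    hratio).mul (h.tendsto_comp hg)
  refine hlim.congr' ?_
  filter_upwards [eventually_gt_atTop 0, hg.eventually_gt_atTop 0] with x hx hgx
  have hx' : (a + b * x⁻¹)⁻¹ = x / (a * x + b) := by field_simp
  simp only [Function.comp_apply, hx', div_rpow hx.le hgx.le]
  field_simp [(rpow_pos_of_pos hgx ν).ne']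

theorem comp_mul (h : HasPowerTail F ν c) {a : ℝ} (ha : 0 < a) :
    HasPowerTail (fun x => F (a * x)) ν (a⁻¹ ^ ν * c) := by
  simpa using h.comp_mul_add ha 0

theorem comp_add (h : HasPowerTail F ν c) (b : ℝ) : HasPowerTail (fun x => F (x + b)) ν c := by
  simpa using h.comp_mul_add one_pos b

theorem pos (h : HasPowerTail F ν c) (hc : 0 < c) (hF : Antitone F) (x : ℝ) : 0 < F x := by
  obtain ⟨y, hyc, hxy, hy⟩ :=
    ((h.eventually_const_lt hc).and ((eventually_ge_atTop x).and (eventually_gt_atTop 0))).exists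
  refine lt_of_lt_of_le ?_ (hF hxy)
  by_contra! hFy
  linarith [mul_nonpos_of_nonneg_of_nonpos (rpow_pos_of_pos hy ν).le hFy]

end HasPowerTail

/-- A squeeze where each bound reaches the limit only after its own parameter `i` or `k` is sent
to its limit: a `liminf`/`limsup` argument without the boundedness side conditions. -/
theorem tendsto_of_tendsto_bounds {β ι κ : Type*} {l : Filter β} {li : Filter ι} {lk : Filter κ}
    [li.NeBot] [lk.NeBot] {f : β → ℝ} {lo : ι → β → ℝ} {hi : κ → β → ℝ} {Lo : ι → ℝ}
    {Hi : κ → ℝ} {L : ℝ} (hLo : Tendsto Lo li (𝓝 L))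
    (hlo : ∀ᶠ i in li, Tendsto (lo i) l (𝓝 (Lo i)) ∧ ∀ᶠ b in l, lo i b ≤ f b)
    (hHi : Tendsto Hi lk (𝓝 L))
    (hhi : ∀ᶠ k in lk, Tendsto (hi k) l (𝓝 (Hi k)) ∧ ∀ᶠ b in l, f b ≤ hi k b) :
    Tendsto f l (𝓝 L) := by
  refine tendsto_order.2 ⟨fun L' hL' => ?_, fun L' hL' => ?_⟩
  · obtain ⟨i, hLi, hlim, hle⟩ := ((hLo.eventually_const_lt hL').and hlo).exists
    filter_upwards [hlim.eventually_const_lt hLi, hle] with b h₁ h₂ using h₁.trans_le h₂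
  · obtain ⟨k, hLk, hlim, hle⟩ := ((hHi.eventually_lt_const hL').and hhi).exists
    filter_upwards [hlim.eventually_lt_const hLk, hle] with b h₁ h₂ using h₂.trans_lt h₁

theorem tendsto_inv_one_sub_rpow_mul (ν c : ℝ) :
    Tendsto (fun δ : ℝ => (1 - δ)⁻¹ ^ ν * c) (𝓝[>] 0) (𝓝 c) := by
  have hcont : ContinuousAt (fun δ : ℝ => (1 - δ)⁻¹ ^ ν * c) 0 :=
    (((continuousAt_const.sub continuousAt_id).inv₀ (by norm_num)).rpow_const
      (Or.inl (by norm_num))).mul continuousAt_const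
  simpa using hcont.tendsto.mono_left nhdsWithin_le_nhds

theorem eventually_lt_of_tendsto_rpow_mul {β : Type*} {l : Filter β} {a b g : β → ℝ}
    {ν A B : ℝ} (hν : 0 < ν) (ha : Tendsto (fun x => a x ^ ν * g x) l (𝓝 A))
    (hb : Tendsto (fun x => b x ^ ν * g x) l (𝓝 B)) (hAB : A < B) (ha₀ : ∀ᶠ x in l, 0 ≤ a x)
    (hb₀ : ∀ᶠ x in l, 0 ≤ b x) (hg : ∀ᶠ x in l, 0 ≤ g x) : ∀ᶠ x in l, a x < b x := by
  filter_upwards [ha.eventually_lt hb hAB, ha₀, hb₀, hg] with x hlt hax hbx hgx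
  exact (rpow_lt_rpow_iff hax hbx hν).1 (lt_of_mul_lt_mul_right hlt hgx)

section IntegralTail

variable {f : ℝ → ℝ} {ν K : ℝ}

theorem eventually_norm_sub_le_rpow (hf : Tendsto (fun t => t ^ (ν + 1) * f t) atTop (𝓝 K))
    {η : ℝ} (hη : 0 < η) :
    ∀ᶠ y in atTop, 0 < y ∧ ∀ t, y ≤ t → ‖f t - K * t ^ (-(ν + 1))‖ ≤ η * t ^ (-(ν + 1)) := by
  obtain ⟨y₀, hy₀⟩ := eventually_atTop.1
    ((hf.eventually (Metric.closedBall_mem_nhds K hη)).and (eventually_gt_atTop 0))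
  filter_upwards [eventually_ge_atTop y₀] with y hy
  refine ⟨(hy₀ y hy).2, fun t hyt => ?_⟩
  obtain ⟨hdist, ht⟩ := hy₀ t (hy.trans hyt)
  have hsplit : f t - K * t ^ (-(ν + 1)) = t ^ (-(ν + 1)) * (t ^ (ν + 1) * f t - K) := by
    rw [mul_sub, ← mul_assoc, ← rpow_add ht, neg_add_cancel, rpow_zero, one_mul, mul_comm]
  rw [hsplit, norm_mul, norm_of_nonneg (rpow_nonneg ht.le _), mul_comm]
  exact mul_le_mul_of_nonneg_right hdist (rpow_nonneg ht.le _)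

theorem integrableOn_Ioi_rpow_neg_add_one (hν : 0 < ν) {y : ℝ} (hy : 0 < y) :
    IntegrableOn (fun t => t ^ (-(ν + 1))) (Ioi y) :=
  integrableOn_Ioi_rpow_of_lt (by linarith) hy

theorem integral_Ioi_rpow_neg_add_one (hν : 0 < ν) {y : ℝ} (hy : 0 < y) :
    ∫ t in Ioi y, t ^ (-(ν + 1)) = y ^ (-ν) / ν := by
  rw [integral_Ioi_rpow_of_lt (by linarith) hy, show -(ν + 1) + 1 = -ν by ring, neg_div_neg_eq]

theorem eventually_integrableOn_Ioi (hν : 0 < ν) (hfm : AEStronglyMeasurable f)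
    (hf : Tendsto (fun t => t ^ (ν + 1) * f t) atTop (𝓝 K)) :
    ∀ᶠ y in atTop, IntegrableOn f (Ioi y) := by
  filter_upwards [eventually_norm_sub_le_rpow hf one_pos] with y ⟨hy, hbound⟩
  refine Integrable.mono' ((integrableOn_Ioi_rpow_neg_add_one hν hy).const_mul (‖K‖ + 1))
    hfm.restrict ((ae_restrict_iff' measurableSet_Ioi).2 (ae_of_all _ fun t hyt => ?_))
  have ht : 0 ≤ t ^ (-(ν + 1)) := rpow_nonneg (hy.trans hyt).le _
  calc ‖f t‖ ≤ ‖f t - K * t ^ (-(ν + 1))‖ + ‖K * t ^ (-(ν + 1))‖ := norm_le_norm_sub_add _ _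
    _ ≤ 1 * t ^ (-(ν + 1)) + ‖K‖ * t ^ (-(ν + 1)) := by
      rw [norm_mul, norm_of_nonneg ht]; gcongr; exact hbound t (le_of_lt hyt)
    _ = (‖K‖ + 1) * t ^ (-(ν + 1)) := by ring

theorem hasPowerTail_integral_Ioi (hν : 0 < ν) (hfm : AEStronglyMeasurable f)
    (hf : Tendsto (fun t => t ^ (ν + 1) * f t) atTop (𝓝 K)) :
    HasPowerTail (fun y => ∫ t in Ioi y, f t) ν (K / ν) := by
  refine Metric.tendsto_nhds.2 fun η hη => ?_
  filter_upwards [eventually_norm_sub_le_rpow hf (half_pos (mul_pos hη hν)),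
    eventually_integrableOn_Ioi hν hfm hf] with y ⟨hy, hbound⟩ hfi
  have hgi := integrableOn_Ioi_rpow_neg_add_one hν hy
  have hyν : 0 < y ^ ν := rpow_pos_of_pos hy ν
  have hdiff : ‖∫ t in Ioi y, (f t - K * t ^ (-(ν + 1)))‖ ≤ η * ν / 2 * (y ^ (-ν) / ν) := by
    rw [← integral_Ioi_rpow_neg_add_one hν hy, ← integral_const_mul]
    refine norm_integral_le_of_norm_le (hgi.const_mul _)
      ((ae_restrict_iff' measurableSet_Ioi).2 (ae_of_all _ fun t ht => hbound t (le_of_lt ht)))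
  rw [integral_sub hfi (hgi.const_mul K), integral_const_mul,
    integral_Ioi_rpow_neg_add_one hν hy] at hdiff
  have hyy : y ^ ν * y ^ (-ν) = 1 := by rw [← rpow_add hy, add_neg_cancel, rpow_zero]
  calc dist (y ^ ν * ∫ t in Ioi y, f t) (K / ν)
      = y ^ ν * ‖(∫ t in Ioi y, f t) - K * (y ^ (-ν) / ν)‖ := by
        rw [dist_eq_norm, norm_eq_abs, norm_eq_abs, ← abs_of_pos hyν, ← abs_mul, abs_of_pos hyν]
        congr 1
        field_simp
        linear_combination K * hyy
    _ ≤ y ^ ν * (η * ν / 2 * (y ^ (-ν) / ν)) := by gcongr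
    _ = η * ν / 2 / ν * (y ^ ν * y ^ (-ν)) := by ring
    _ = η / 2 := by rw [hyy]; field_simp
    _ < η := half_lt_self hη

theorem hasPowerTail_withDensity (hν : 0 < ν) (hfm : AEStronglyMeasurable f) (hf₀ : 0 ≤ f)
    (hf : Tendsto (fun t => t ^ (ν + 1) * f t) atTop (𝓝 K)) :
    HasPowerTail (fun y => (volume.withDensity fun t => ENNReal.ofReal (f t)).real (Ioi y))
      ν (K / ν) := by
  refine (hasPowerTail_integral_Ioi hν hfm hf).congr' ?_
  filter_upwards [eventually_integrableOn_Ioi hν hfm hf] with y hfi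
  rw [measureReal_def, withDensity_apply _ measurableSet_Ioi,
    ← ofReal_integral_eq_lintegral_ofReal hfi (ae_of_all _ hf₀),
    ENNReal.toReal_ofReal (setIntegral_nonneg measurableSet_Ioi fun t _ => hf₀ t)]

end IntegralTail

section Student

variable {ν σ : ℝ}

theorem Cnu_pos (hν : 0 < ν) : 0 < Cnu ν :=
  div_pos (Gamma_pos_of_pos (by linarith))
    (mul_pos (Gamma_pos_of_pos (by linarith)) (sqrt_pos.2 (mul_pos hν pi_pos)))

theorem studentPdf_nonneg (hν : 0 < ν) (hσ : 0 < σ) (x : ℝ) : 0 ≤ studentPdf ν σ x :=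
  mul_nonneg (div_nonneg (Cnu_pos hν).le hσ.le) (rpow_nonneg (by positivity) _)

theorem measurable_studentPdf : Measurable (studentPdf ν σ) := by
  unfold studentPdf
  fun_prop

theorem rpow_mul_studentPdf (hν : 0 < ν) (hσ : 0 < σ) {t : ℝ} (ht : 0 < t) :
    t ^ (ν + 1) * studentPdf ν σ t
      = Cnu ν / σ * (t⁻¹ ^ 2 + (ν * σ ^ 2)⁻¹) ^ (-((ν + 1) / 2)) := by
  have hsplit : 1 + t ^ 2 / (ν * σ ^ 2) = t ^ 2 * (t⁻¹ ^ 2 + (ν * σ ^ 2)⁻¹) := by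
    field_simp
  have hsq : (t ^ 2) ^ (-((ν + 1) / 2)) = (t ^ (ν + 1))⁻¹ := by
    rw [← rpow_natCast, ← rpow_mul ht.le, ← rpow_neg ht.le]
    norm_num [mul_div_cancel₀]
  rw [studentPdf, hsplit, mul_rpow (by positivity) (by positivity), hsq]
  field_simp [(rpow_pos_of_pos ht (ν + 1)).ne']

theorem tendsto_rpow_mul_studentPdf (hν : 0 < ν) (hσ : 0 < σ) :
    Tendsto (fun t => t ^ (ν + 1) * studentPdf ν σ t) atTop
      (𝓝 (Cnu ν / σ * (ν * σ ^ 2) ^ ((ν + 1) / 2))) := by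
  have hbase : Tendsto (fun t : ℝ => t⁻¹ ^ 2 + (ν * σ ^ 2)⁻¹) atTop (𝓝 (ν * σ ^ 2)⁻¹) := by
    have h := (tendsto_inv_atTop_zero.pow 2).add_const (ν * σ ^ 2)⁻¹
    rwa [zero_pow two_ne_zero, zero_add] at h
  have hlim := ((continuousAt_rpow_const _ (-((ν + 1) / 2))
    (Or.inl (by positivity))).tendsto.comp hbase).const_mul (Cnu ν / σ)
  rw [inv_rpow (by positivity), ← rpow_neg (by positivity), neg_neg] at hlim
  refine hlim.congr' ?_
  filter_upwards [eventually_gt_atTop 0] with t ht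
  rw [rpow_mul_studentPdf hν hσ ht, Function.comp_apply]

theorem hasPowerTail_student (hν : 0 < ν) (hσ : 0 < σ) :
    HasPowerTail
      (fun y => (volume.withDensity fun t => ENNReal.ofReal (studentPdf ν σ t)).real (Ioi y))
      ν (Cnu ν * ν ^ ((ν - 1) / 2) * σ ^ ν) := by
  convert hasPowerTail_withDensity hν measurable_studentPdf.aestronglyMeasurable
    (studentPdf_nonneg hν hσ) (tendsto_rpow_mul_studentPdf hν hσ) using 1
  rw [mul_rpow hν.le (sq_nonneg σ), ← rpow_natCast, ← rpow_mul hσ.le,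
    show (ν + 1) / 2 = (ν - 1) / 2 + 1 by ring, rpow_add_one hν.ne',
    show ((2 : ℕ) : ℝ) * ((ν - 1) / 2 + 1) = ν + 1 by push_cast; ring, rpow_add_one hσ.ne']
  field_simp

end Student

section Quantile

variable {μ : Measure ℝ} {u : ℝ}

theorem measureReal_Ioi_eq_one_sub_cdf [IsProbabilityMeasure μ] (x : ℝ) :
    μ.real (Ioi x) = 1 - cdf μ x := by
  rw [cdf_eq_real, ← compl_Iic, measureReal_compl measurableSet_Iic, probReal_univ]

theorem bddBelow_setOf_le_cdf (hu : 0 < u) : BddBelow {x | u ≤ cdf μ x} := by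
  obtain ⟨x₀, hx₀⟩ := ((tendsto_cdf_atBot μ).eventually (eventually_lt_nhds hu)).exists
  exact ⟨x₀, fun x hx => le_of_not_ge fun hxx₀ => (hx.trans (monotone_cdf μ hxx₀)).not_gt hx₀⟩

theorem nonempty_setOf_le_cdf (hu : u < 1) : {x | u ≤ cdf μ x}.Nonempty :=
  ((tendsto_cdf_atTop μ).eventually (eventually_ge_nhds hu)).exists

theorem cdf_lt_of_lt_quantile (hu : 0 < u) {x : ℝ} (hx : x < quantile (cdf μ) u) :
    cdf μ x < u :=
  lt_of_not_ge fun hux => (csInf_le (bddBelow_setOf_le_cdf hu) hux).not_gt hx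

theorem le_cdf_quantile (hu₀ : 0 < u) (hu₁ : u < 1) : u ≤ cdf μ (quantile (cdf μ) u) := by
  have hright : ∀ z, quantile (cdf μ) u < z → u ≤ cdf μ z := fun z hz => by
    obtain ⟨x, hx, hxz⟩ :=
      (csInf_lt_iff (bddBelow_setOf_le_cdf hu₀) (nonempty_setOf_le_cdf hu₁)).1 hz
    exact hx.trans (monotone_cdf μ hxz.le)
  exact ge_of_tendsto (((cdf μ).right_continuous _).mono Ioi_subset_Ici_self).tendsto
    (eventually_nhdsWithin_of_forall hright)

theorem tendsto_quantile_atTop (h : ∀ x, cdf μ x < 1) :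
    Tendsto (quantile (cdf μ)) (𝓝[<] 1) atTop := by
  refine tendsto_atTop.2 fun M => ?_
  filter_upwards [Ioo_mem_nhdsLT (max_lt (h M) one_pos)] with u ⟨hMu, hu⟩
  refine le_csInf (nonempty_setOf_le_cdf hu) fun x hx => le_of_not_gt fun hxM => ?_
  exact (hx.trans (monotone_cdf μ hxM.le)).not_gt (le_max_left _ _ |>.trans_lt hMu)

theorem measureReal_Ioi_quantile_le [IsProbabilityMeasure μ] (hu₀ : 0 < u) (hu₁ : u < 1) :
    μ.real (Ioi (quantile (cdf μ) u)) ≤ 1 - u := by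
  rw [measureReal_Ioi_eq_one_sub_cdf]
  linarith [le_cdf_quantile (μ := μ) hu₀ hu₁]

theorem one_sub_lt_measureReal_Ioi [IsProbabilityMeasure μ] (hu : 0 < u) {x : ℝ}
    (hx : x < quantile (cdf μ) u) : 1 - u < μ.real (Ioi x) := by
  rw [measureReal_Ioi_eq_one_sub_cdf]
  linarith [cdf_lt_of_lt_quantile hu hx]

/-- No continuity of the cdf is needed: `μ(q, ∞) ≤ 1 - u < μ(q - 1, ∞)` at the quantile `q`, and
both bounds have the same power tail. -/
theorem HasPowerTail.tendsto_quantile [IsProbabilityMeasure μ] {ν c : ℝ}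
    (h : HasPowerTail (fun x => μ.real (Ioi x)) ν c) (hc : 0 < c) :
    Tendsto (quantile (cdf μ)) (𝓝[<] 1) atTop ∧
      Tendsto (fun u => quantile (cdf μ) u ^ ν * (1 - u)) (𝓝[<] 1) (𝓝 c) := by
  have hpos := h.pos hc fun x y hxy => measureReal_mono (Ioi_subset_Ioi hxy)
  have hq := tendsto_quantile_atTop (μ := μ) fun x => by
    linarith [hpos x, measureReal_Ioi_eq_one_sub_cdf (μ := μ) x]
  refine ⟨hq, tendsto_of_tendsto_of_tendsto_of_le_of_le' (h.tendsto_comp hq)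
    ((h.comp_add (-1)).tendsto_comp hq) ?_ ?_⟩ <;>
  filter_upwards [Ioo_mem_nhdsLT (zero_lt_one' ℝ), hq.eventually_gt_atTop 0] with u ⟨hu₀, hu₁⟩ hqu
  · exact mul_le_mul_of_nonneg_left (measureReal_Ioi_quantile_le hu₀ hu₁) (rpow_nonneg hqu.le _)
  · refine mul_le_mul_of_nonneg_left (one_sub_lt_measureReal_Ioi hu₀ ?_).le (rpow_nonneg hqu.le _)
    linarith

end Quantile

def tailProb {Ω : Type*} [MeasurableSpace Ω] (P : Measure Ω) (Z : Ω → ℝ) (x : ℝ) : ℝ :=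
  P.real (Z ⁻¹' Ioi x)

section IndependentSum

variable {Ω : Type*} [MeasurableSpace Ω] {P : Measure Ω} {Z W : Ω → ℝ} {ν cZ cW : ℝ}

theorem tailProb_eq_map (hZ : Measurable Z) (x : ℝ) :
    tailProb P Z x = (P.map Z).real (Ioi x) :=
  (map_measureReal_apply hZ measurableSet_Ioi).symm

theorem tendsto_tailProb_atBot [IsProbabilityMeasure P] (hZ : Measurable Z) :
    Tendsto (tailProb P Z) atBot (𝓝 1) := by
  have : IsProbabilityMeasure (P.map Z) := Measure.isProbabilityMeasure_map hZ.aemeasurable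
  have h := (tendsto_cdf_atBot (P.map Z)).const_sub 1
  rw [sub_zero] at h
  exact h.congr fun x => by rw [tailProb_eq_map hZ, measureReal_Ioi_eq_one_sub_cdf]

theorem ProbabilityTheory.IndepFun.measureReal_inter_Ioi (hind : IndepFun Z W P) (a b : ℝ) :
    P.real (Z ⁻¹' Ioi a ∩ W ⁻¹' Ioi b) = tailProb P Z a * tailProb P W b := by
  rw [tailProb, tailProb, measureReal_def, measureReal_def, measureReal_def,
    hind.measure_inter_preimage_eq_mul _ _ measurableSet_Ioi measurableSet_Ioi,
    ENNReal.toReal_mul]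

theorem HasPowerTail.tailProb_const_mul (h : HasPowerTail (tailProb P Z) ν cZ) {a : ℝ}
    (ha : 0 < a) : HasPowerTail (tailProb P fun ω => a * Z ω) ν (a ^ ν * cZ) := by
  have hset : ∀ x, (fun ω => a * Z ω) ⁻¹' Ioi x = Z ⁻¹' Ioi (a⁻¹ * x) := fun x => by
    ext ω
    simp [inv_mul_lt_iff₀ ha]
  have h' := h.comp_mul (inv_pos.2 ha)
  rw [inv_inv] at h'
  exact h'.congr' (.of_forall fun x => by simp only [tailProb, hset])

theorem tailProb_add_le [IsFiniteMeasure P] (hind : IndepFun Z W P) (δ x : ℝ) :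
    tailProb P (fun ω => Z ω + W ω) x ≤ tailProb P Z ((1 - δ) * x) + tailProb P W ((1 - δ) * x)
      + tailProb P Z (δ * x) * tailProb P W (δ * x) := by
  have hsub : (fun ω => Z ω + W ω) ⁻¹' Ioi x ⊆ Z ⁻¹' Ioi ((1 - δ) * x) ∪ W ⁻¹' Ioi ((1 - δ) * x)
      ∪ (Z ⁻¹' Ioi (δ * x) ∩ W ⁻¹' Ioi (δ * x)) := by
    intro ω hω
    simp only [mem_preimage, mem_Ioi, mem_union, mem_inter_iff] at hω ⊢
    by_cases hZ : (1 - δ) * x < Z ω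
    · exact Or.inl (Or.inl hZ)
    by_cases hW : (1 - δ) * x < W ω
    · exact Or.inl (Or.inr hW)
    exact Or.inr ⟨by linarith, by linarith⟩
  calc tailProb P (fun ω => Z ω + W ω) x
      ≤ P.real (Z ⁻¹' Ioi ((1 - δ) * x)) + P.real (W ⁻¹' Ioi ((1 - δ) * x))
        + P.real (Z ⁻¹' Ioi (δ * x) ∩ W ⁻¹' Ioi (δ * x)) :=
      (measureReal_mono hsub).trans
        ((measureReal_union_le _ _).trans (add_le_add_left (measureReal_union_le _ _) _))
    _ = _ := by rw [hind.measureReal_inter_Ioi]; rfl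

theorem tailProb_add_ge [IsFiniteMeasure P] (hZ : Measurable Z) (hW : Measurable W)
    (hind : IndepFun Z W P) (m x : ℝ) :
    tailProb P Z (x + m) * tailProb P W (-m) + tailProb P Z (-m) * tailProb P W (x + m)
      - tailProb P Z (x + m) * tailProb P W (x + m) ≤ tailProb P (fun ω => Z ω + W ω) x := by
  have hAB : Z ⁻¹' Ioi (x + m) ∩ W ⁻¹' Ioi (-m) ∪ Z ⁻¹' Ioi (-m) ∩ W ⁻¹' Ioi (x + m)
      ⊆ (fun ω => Z ω + W ω) ⁻¹' Ioi x := by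
    rintro ω (⟨h₁, h₂⟩ | ⟨h₁, h₂⟩) <;> simp only [mem_preimage, mem_Ioi] at * <;> linarith
  have hAB' : Z ⁻¹' Ioi (x + m) ∩ W ⁻¹' Ioi (-m) ∩ (Z ⁻¹' Ioi (-m) ∩ W ⁻¹' Ioi (x + m))
      ⊆ Z ⁻¹' Ioi (x + m) ∩ W ⁻¹' Ioi (x + m) := fun ω h => ⟨h.1.1, h.2.2⟩
  have hunion := measureReal_union_add_inter (μ := P) (s := Z ⁻¹' Ioi (x + m) ∩ W ⁻¹' Ioi (-m))
    ((hZ (measurableSet_Ioi (a := -m))).inter (hW (measurableSet_Ioi (a := x + m))))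
  rw [hind.measureReal_inter_Ioi, hind.measureReal_inter_Ioi] at hunion
  have hsum : P.real (Z ⁻¹' Ioi (x + m) ∩ W ⁻¹' Ioi (-m) ∪ Z ⁻¹' Ioi (-m) ∩ W ⁻¹' Ioi (x + m))
      ≤ tailProb P (fun ω => Z ω + W ω) x := measureReal_mono hAB
  linarith [measureReal_mono (μ := P) hAB',
    hind.measureReal_inter_Ioi (x + m) (x + m)]

theorem HasPowerTail.tailProb_add [IsProbabilityMeasure P] (hν : 0 < ν) (hZ : Measurable Z)
    (hW : Measurable W) (hind : IndepFun Z W P) (hZt : HasPowerTail (tailProb P Z) ν cZ)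
    (hWt : HasPowerTail (tailProb P W) ν cW) :
    HasPowerTail (tailProb P fun ω => Z ω + W ω) ν (cZ + cW) := by
  have hW₀ := hWt.tendsto_zero hν
  refine tendsto_of_tendsto_bounds (li := atTop) (lk := 𝓝[>] 0)
    (lo := fun m x => x ^ ν * (tailProb P Z (x + m) * tailProb P W (-m)
      + tailProb P Z (-m) * tailProb P W (x + m) - tailProb P Z (x + m) * tailProb P W (x + m)))
    (Lo := fun m => cZ * tailProb P W (-m) + tailProb P Z (-m) * cW)
    (hi := fun δ x => x ^ ν * (tailProb P Z ((1 - δ) * x) + tailProb P W ((1 - δ) * x)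
      + tailProb P Z (δ * x) * tailProb P W (δ * x)))
    (Hi := fun δ => (1 - δ)⁻¹ ^ ν * (cZ + cW)) ?_ (.of_forall fun m => ⟨?_, ?_⟩)
    (tendsto_inv_one_sub_rpow_mul ν _) ?_
  · simpa using (((tendsto_tailProb_atBot hW).comp tendsto_neg_atTop_atBot).const_mul cZ).add
      (((tendsto_tailProb_atBot hZ).comp tendsto_neg_atTop_atBot).mul_const cW)
  · have hshift := tendsto_atTop_add_const_right _ m tendsto_id
    have h := (((hZt.comp_add m).mul_const (tailProb P W (-m))).add
      ((hWt.comp_add m).const_mul (tailProb P Z (-m)))).sub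
      ((hZt.comp_add m).mul (hW₀.comp hshift))
    rw [mul_zero, sub_zero] at h
    exact h.congr fun x => by simp only [Function.comp_apply, id]; ring
  · filter_upwards [eventually_ge_atTop 0] with x hx
    exact mul_le_mul_of_nonneg_left (tailProb_add_ge hZ hW hind m x) (rpow_nonneg hx _)
  · filter_upwards [Ioo_mem_nhdsGT one_pos] with δ ⟨hδ₀, hδ₁⟩
    refine ⟨?_, ?_⟩
    · have h := ((hZt.comp_mul (sub_pos.2 hδ₁)).add (hWt.comp_mul (sub_pos.2 hδ₁))).add
        ((hZt.comp_mul hδ₀).mul (hW₀.comp (tendsto_id.const_mul_atTop hδ₀)))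
      rw [mul_zero, add_zero, ← mul_add] at h
      exact h.congr fun x => by simp only [Function.comp_apply, id]; ring
    · filter_upwards [eventually_ge_atTop 0] with x hx
      exact mul_le_mul_of_nonneg_left (tailProb_add_le hind δ x) (rpow_nonneg hx _)

theorem measureReal_add_inter_le [IsFiniteMeasure P] (hind : IndepFun Z W P) (δ s t : ℝ) :
    P.real {ω | t < Z ω + W ω ∧ s < Z ω}
      ≤ tailProb P Z ((1 - δ) * t) + tailProb P Z s * tailProb P W (δ * t) := by
  have hsub : {ω | t < Z ω + W ω ∧ s < Z ω}
      ⊆ Z ⁻¹' Ioi ((1 - δ) * t) ∪ Z ⁻¹' Ioi s ∩ W ⁻¹' Ioi (δ * t) := by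
    rintro ω ⟨h₁, h₂⟩
    by_cases hZ : (1 - δ) * t < Z ω
    · exact Or.inl hZ
    exact Or.inr ⟨h₂, show δ * t < W ω by linarith⟩
  rw [← hind.measureReal_inter_Ioi]
  exact (measureReal_mono hsub).trans (measureReal_union_le _ _)

theorem le_measureReal_add_inter [IsFiniteMeasure P] (hind : IndepFun Z W P) {m s t : ℝ}
    (h : s ≤ t + m) :
    tailProb P Z (t + m) * tailProb P W (-m) ≤ P.real {ω | t < Z ω + W ω ∧ s < Z ω} := by
  rw [← hind.measureReal_inter_Ioi]
  refine measureReal_mono fun ω ⟨h₁, h₂⟩ => ?_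
  simp only [mem_preimage, mem_Ioi] at h₁ h₂
  exact ⟨by linarith, by linarith⟩

theorem tendsto_rpow_mul_measureReal_add_inter [IsProbabilityMeasure P] (hν : 0 < ν)
    (hW : Measurable W) (hind : IndepFun Z W P) (hZt : HasPowerTail (tailProb P Z) ν cZ)
    (hWt : HasPowerTail (tailProb P W) ν cW) {β : Type*} {l : Filter β} {s t : β → ℝ}
    (hs : Tendsto s l atTop) (ht : Tendsto t l atTop) (hst : ∀ᶠ b in l, s b < t b) :
    Tendsto (fun b => t b ^ ν * P.real {ω | t b < Z ω + W ω ∧ s b < Z ω}) l (𝓝 cZ) := by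
  refine tendsto_of_tendsto_bounds (li := atTop) (lk := 𝓝[>] 0)
    (lo := fun m b => t b ^ ν * tailProb P Z (t b + m) * tailProb P W (-m))
    (Lo := fun m => cZ * tailProb P W (-m))
    (hi := fun δ b => t b ^ ν * tailProb P Z ((1 - δ) * t b)
      + tailProb P Z (s b) * (t b ^ ν * tailProb P W (δ * t b)))
    (Hi := fun δ => (1 - δ)⁻¹ ^ ν * cZ) ?_ ?_ (tendsto_inv_one_sub_rpow_mul ν _) ?_
  · simpa using ((tendsto_tailProb_atBot hW).comp tendsto_neg_atTop_atBot).const_mul cZ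
  · filter_upwards [eventually_ge_atTop 0] with m hm
    refine ⟨((hZt.comp_add m).tendsto_comp ht).mul_const _, ?_⟩
    filter_upwards [hst, ht.eventually_ge_atTop 0] with b hb htb
    rw [mul_assoc]
    exact mul_le_mul_of_nonneg_left (le_measureReal_add_inter hind (by linarith))
      (rpow_nonneg htb _)
  · filter_upwards [Ioo_mem_nhdsGT one_pos] with δ ⟨hδ₀, hδ₁⟩
    refine ⟨?_, ?_⟩
    · simpa using ((hZt.comp_mul (sub_pos.2 hδ₁)).tendsto_comp ht).add
        (((hZt.tendsto_zero hν).comp hs).mul ((hWt.comp_mul hδ₀).tendsto_comp ht))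
    · filter_upwards [ht.eventually_ge_atTop 0] with b htb
      have h := mul_le_mul_of_nonneg_left (measureReal_add_inter_le hind δ (s b) (t b))
        (rpow_nonneg htb ν)
      linarith

end IndependentSum

section TailDependence

variable {Ω : Type*} [MeasurableSpace Ω] {P : Measure Ω} [IsProbabilityMeasure P]
  {Y ε : Ω → ℝ} {ν α cY cε : ℝ}

theorem tendsto_tailDependence (hν : 0 < ν) (hα : 0 < α) (hcY : 0 < cY) (hcε : 0 < cε)
    (hY : Measurable Y) (hε : Measurable ε) (hind : IndepFun Y ε P)
    (hYt : HasPowerTail (tailProb P Y) ν cY) (hεt : HasPowerTail (tailProb P ε) ν cε) :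
    Tendsto (fun u =>
      P.real {ω | quantile (cdf (P.map fun ω => α * Y ω + ε ω)) u < α * Y ω + ε ω ∧
        quantile (cdf (P.map Y)) u < Y ω} / P.real {ω | quantile (cdf (P.map Y)) u < Y ω})
      (𝓝[<] 1) (𝓝 (α ^ ν * cY / (α ^ ν * cY + cε))) := by
  have hX : Measurable fun ω => α * Y ω + ε ω := by fun_prop
  have : IsProbabilityMeasure (P.map Y) := Measure.isProbabilityMeasure_map hY.aemeasurable
  have : IsProbabilityMeasure (P.map fun ω => α * Y ω + ε ω) :=
    Measure.isProbabilityMeasure_map hX.aemeasurable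
  have hindZ : IndepFun (fun ω => α * Y ω) ε P := hind.comp (measurable_const_mul α) measurable_id
  have hZt := hYt.tailProb_const_mul hα
  have hXt := hZt.tailProb_add hν (hY.const_mul α) hε hindZ hεt
  have hL : 0 < α ^ ν * cY + cε := by positivity
  obtain ⟨hs, hs₁⟩ := (hYt.congr' (.of_forall (tailProb_eq_map hY))).tendsto_quantile hcY
  obtain ⟨ht, ht₁⟩ := (hXt.congr' (.of_forall (tailProb_eq_map hX))).tendsto_quantile hL
  generalize quantile (cdf (P.map Y)) = s at hs hs₁ ⊢
  generalize quantile (cdf (P.map fun ω => α * Y ω + ε ω)) = t at ht ht₁ ⊢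
  have hu : ∀ᶠ u in 𝓝[<] (1 : ℝ), 0 < 1 - u :=
    eventually_nhdsWithin_of_forall fun _ hu => sub_pos.2 hu
  have hαs : Tendsto (fun u => (α * s u) ^ ν * (1 - u)) (𝓝[<] 1) (𝓝 (α ^ ν * cY)) := by
    refine (hs₁.const_mul (α ^ ν)).congr' ?_
    filter_upwards [hs.eventually_ge_atTop 0] with u hsu
    rw [mul_rpow hα.le hsu, mul_assoc]
  have hst : ∀ᶠ u in 𝓝[<] 1, α * s u < t u :=
    eventually_lt_of_tendsto_rpow_mul hν hαs ht₁ (by linarith)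
      ((hs.const_mul_atTop hα).eventually_ge_atTop 0) (ht.eventually_ge_atTop 0)
      (hu.mono fun _ => le_of_lt)
  have hnum := tendsto_rpow_mul_measureReal_add_inter hν hε hindZ hZt hεt
    (hs.const_mul_atTop hα) ht hst
  have hden : Tendsto (fun u => t u ^ ν * tailProb P Y (s u)) (𝓝[<] 1)
      (𝓝 (α ^ ν * cY + cε)) := by
    have h := ht₁.mul ((hYt.tendsto_comp hs).div hs₁ hcY.ne')
    rw [div_self hcY.ne', mul_one] at h
    refine h.congr' ?_
    filter_upwards [hs.eventually_gt_atTop 0, hu] with u hsu hu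
    rw [Pi.div_apply]
    field_simp [(rpow_pos_of_pos hsu ν).ne', hu.ne']
  refine (hnum.div hden hL.ne').congr' ?_
  filter_upwards [ht.eventually_gt_atTop 0] with u htu
  simp only [mul_lt_mul_iff_right₀ hα]
  exact mul_div_mul_left _ _ (rpow_pos_of_pos htu ν).ne'

end TailDependence

theorem cdf_map_apply {Ω : Type*} [MeasurableSpace Ω] {P : Measure Ω} [IsProbabilityMeasure P]
    {Z : Ω → ℝ} (hZ : Measurable Z) (x : ℝ) : cdf (P.map Z) x = (P {ω | Z ω ≤ x}).toReal := by
  have : IsProbabilityMeasure (P.map Z) := Measure.isProbabilityMeasure_map hZ.aemeasurable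
  rw [cdf_eq_real, map_measureReal_apply hZ measurableSet_Iic]
  rfl

theorem HasPowerTail.tailProb_of_map_eq {Ω : Type*} [MeasurableSpace Ω] {P : Measure Ω}
    {Z : Ω → ℝ} {μ : Measure ℝ} {ν c : ℝ} (hZ : Measurable Z) (hlaw : P.map Z = μ)
    (h : HasPowerTail (fun y => μ.real (Ioi y)) ν c) : HasPowerTail (tailProb P Z) ν c :=
  h.congr' (.of_forall fun x => by rw [tailProb_eq_map hZ, hlaw])

theorem stmt17 {Ω : Type*} [MeasurableSpace Ω] (P : Measure Ω) [IsProbabilityMeasure P]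
    (ν σ α : ℝ) (hν : 0 < ν) (hσ : 0 < σ) (hα : 0 < α)
    (Y ε : Ω → ℝ) (hY : Measurable Y) (hε : Measurable ε) (hind : IndepFun Y ε P)
    (hYlaw : Measure.map Y P
      = volume.withDensity (fun y => ENNReal.ofReal (studentPdf ν 1 y)))
    (hεlaw : Measure.map ε P
      = volume.withDensity (fun e => ENNReal.ofReal (studentPdf ν σ e)))
    (X : Ω → ℝ) (hX : X = fun ω => α * Y ω + ε ω)
    (FX FY : ℝ → ℝ)
    (hFX : FX = fun x => (P {ω | X ω ≤ x}).toReal)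
    (hFY : FY = fun y => (P {ω | Y ω ≤ y}).toReal) :
    Tendsto
      (fun u : ℝ => (P {ω | X ω > quantile FX u ∧ Y ω > quantile FY u}).toReal /
        (P {ω | Y ω > quantile FY u}).toReal)
      (nhdsWithin 1 (Set.Iio 1)) (nhds (1 / (1 + (σ / α) ^ ν))) := by
  set c := Cnu ν * ν ^ ((ν - 1) / 2)
  have hc : 0 < c := mul_pos (Cnu_pos hν) (rpow_pos_of_pos hν _)
  have hYt : HasPowerTail (tailProb P Y) ν c := by
    simpa [c] using (hasPowerTail_student hν one_pos).tailProb_of_map_eq hY hYlaw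
  have hεt : HasPowerTail (tailProb P ε) ν (c * σ ^ ν) :=
    (hasPowerTail_student hν hσ).tailProb_of_map_eq hε hεlaw
  have hlim := tendsto_tailDependence hν hα hc (by positivity) hY hε hind hYt hεt
  have hconst : α ^ ν * c / (α ^ ν * c + c * σ ^ ν) = 1 / (1 + (σ / α) ^ ν) := by
    rw [div_rpow hσ.le hα.le]
    field_simp [(rpow_pos_of_pos hα ν).ne']
  subst hX
  have hFX' : FX = cdf (P.map fun ω => α * Y ω + ε ω) := funext fun x => by
    rw [hFX, cdf_map_apply (by fun_prop)]
  have hFY' : FY = cdf (P.map Y) := funext fun y => by rw [hFY, cdf_map_apply hY]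
  rw [hFX', hFY', ← hconst]
  exact hlim
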